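/- Let ‖·‖ be a norm on ℂ^d, A ∈ M_d(ℂ) with ‖A‖ ≤ 1 (operator norm), x ∈ ℂ^d with ‖x‖ = 1, ε > 0, and λ ∈ ℂ with |λ| ≤ 2. If ‖Ax − λx‖ ≤ (ε|λ|)^d, then the spectral radius of A satisfies Λ(A) ≥ |λ|(1 − 4ε). -/

import Mathlib

open scoped Pointwise
open Filter

/-- A norm on `ℂ^d`, given as a plain function with the norm axioms. -/
def IsCNorm {d : ℕ} (v : (Fin d → ℂ) → ℝ) : Prop :=
  (∀ x, 0 ≤ v x) ∧ (∀ x, v x = 0 ↔ x = 0) ∧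
  (∀ (a : ℂ) (x), v (a • x) = ‖a‖ * v x) ∧ (∀ x y, v (x + y) ≤ v x + v y)

/-- Operator norm on matrices induced by the norm `v` on `ℂ^d`. -/
noncomputable def opNorm {d : ℕ} (v : (Fin d → ℂ) → ℝ) (A : Matrix (Fin d) (Fin d) ℂ) : ℝ :=
  sSup {c : ℝ | ∃ x : Fin d → ℂ, v x ≤ 1 ∧ c = v (A.mulVec x)}

/-- Norm of a set of matrices: `sup_{s ∈ S} ‖s‖`. -/
noncomputable def setOpNorm {d : ℕ} (v : (Fin d → ℂ) → ℝ)
    (S : Set (Matrix (Fin d) (Fin d) ℂ)) : ℝ :=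
  sSup (opNorm v '' S)

/-- The sup norm on `ℂ^d`, used as reference norm to define the joint spectral radius. -/
noncomputable def stdNorm {d : ℕ} (x : Fin d → ℂ) : ℝ := ‖x‖

/-- The joint spectral radius `ρ(S) = inf_{n ≥ 1} ‖Sⁿ‖^{1/n}`. -/
noncomputable def jsr {d : ℕ} (S : Set (Matrix (Fin d) (Fin d) ℂ)) : ℝ :=
  ⨅ n : ℕ, setOpNorm stdNorm (S ^ (n + 1)) ^ (1 / (n + 1 : ℝ))

/-- The spectral radius of a matrix: the largest modulus of an eigenvalue. -/
noncomputable def specRad {d : ℕ} (A : Matrix (Fin d) (Fin d) ℂ) : ℝ :=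
  sSup ((fun μ : ℂ => ‖μ‖) '' spectrum ℂ A)

/-- `Λ(S) = sup_{s ∈ S} Λ(s)`. -/
noncomputable def lamSet {d : ℕ} (S : Set (Matrix (Fin d) (Fin d) ℂ)) : ℝ :=
  sSup (specRad '' S)

/-- Boundedness of a set of matrices. -/
def MatBdd {d : ℕ} (S : Set (Matrix (Fin d) (Fin d) ℂ)) : Prop :=
  ∃ C : ℝ, ∀ A ∈ S, ∀ i j, ‖A i j‖ ≤ C

/-- `S` is irreducible: it preserves no nonzero proper subspace of `ℂ^d`. -/
def IsIrred {d : ℕ} (S : Set (Matrix (Fin d) (Fin d) ℂ)) : Prop :=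
  ∀ W : Submodule ℂ (Fin d → ℂ), (∀ A ∈ S, ∀ x ∈ W, A.mulVec x ∈ W) → W = ⊥ ∨ W = ⊤

/-! Let `μ₁, …, μ_d` be the eigenvalues of `A`, with multiplicity; an eigenvector shows
`|μᵢ| ≤ ‖A‖ ≤ 1`. By Cayley–Hamilton `∏ (A - μᵢ) x = 0`, and replacing `A` by `λ` one factor at a
time costs at most a factor `3` each (`‖A - μᵢ‖ ≤ 2`, `|λ - μᵢ| ≤ 3`), so
`|χ_A(λ)| = ∏ |λ - μᵢ| ≤ 3^d ‖Ax - λx‖ ≤ (3ε|λ|)^d`. Hence some `|λ - μᵢ| ≤ 3ε|λ|`, and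
`Λ(A) ≥ |μᵢ| ≥ |λ|(1 - 3ε)`. -/

open Matrix Polynomial

lemma Polynomial.eval_multiset_prod_X_sub_C {R : Type*} [CommRing R] (s : Multiset R) (z : R) :
    (s.map (X - C ·)).prod.eval z = (s.map (z - ·)).prod := by
  simp [eval_multiset_prod]

section NormedField

variable {𝕜 ι : Type*} [NormedField 𝕜] {s : Multiset ι} {f : ι → 𝕜}

lemma Multiset.norm_prod_map (s : Multiset ι) (f : ι → 𝕜) :
    ‖(s.map f).prod‖ = (s.map (‖f ·‖)).prod := by
  simpa [Multiset.map_map] using map_multiset_prod normHom (s.map f)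

lemma Multiset.norm_prod_map_le_pow_card {R : ℝ} (hs : ∀ i ∈ s, ‖f i‖ ≤ R) :
    ‖(s.map f).prod‖ ≤ R ^ card s := by
  rw [norm_prod_map]
  simpa using prod_map_le_prod_map₀ _ (fun _ => R) (fun _ _ => norm_nonneg _) hs

lemma Multiset.exists_mem_norm_le_of_norm_prod_map_le (hs : s ≠ 0) {r : ℝ} (hr : 0 ≤ r)
    (h : ‖(s.map f).prod‖ ≤ r ^ card s) : ∃ i ∈ s, ‖f i‖ ≤ r := by
  classical
  obtain ⟨i, hi, hmin⟩ := s.toFinset.exists_min_image (‖f ·‖) (toFinset_nonempty.2 hs)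
  refine ⟨i, mem_toFinset.1 hi, ?_⟩
  have hle : ‖f i‖ ^ card s ≤ r ^ card s := by
    refine le_trans ?_ (h.trans_eq' (norm_prod_map s f))
    simpa using prod_map_le_prod_map₀ (fun _ => ‖f i‖) (‖f ·‖) (fun _ _ => norm_nonneg _)
      fun j hj => hmin j (mem_toFinset.2 hj)
  exact (pow_le_pow_iff_left₀ (norm_nonneg _) hr (card_pos.2 hs).ne').1 hle

end NormedField

namespace IsCNorm

variable {d : ℕ} {v : (Fin d → ℂ) → ℝ}

lemma nonneg (hv : IsCNorm v) (x : Fin d → ℂ) : 0 ≤ v x := hv.1 x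

lemma map_smul (hv : IsCNorm v) (a : ℂ) (x : Fin d → ℂ) : v (a • x) = ‖a‖ * v x := hv.2.2.1 a x

lemma add_le (hv : IsCNorm v) (x y : Fin d → ℂ) : v (x + y) ≤ v x + v y := hv.2.2.2 x y

lemma map_zero (hv : IsCNorm v) : v 0 = 0 := (hv.2.1 0).2 rfl

lemma pos (hv : IsCNorm v) {x : Fin d → ℂ} (hx : x ≠ 0) : 0 < v x :=
  (hv.nonneg x).lt_of_ne fun h => hx ((hv.2.1 x).1 h.symm)

lemma map_neg (hv : IsCNorm v) (x : Fin d → ℂ) : v (-x) = v x := by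
  simpa using hv.map_smul (-1) x

lemma sub_le (hv : IsCNorm v) (x y : Fin d → ℂ) : v (x - y) ≤ v x + v y := by
  simpa [sub_eq_add_neg, hv.map_neg] using hv.add_le x (-y)

lemma abs_sub_le (hv : IsCNorm v) (x y : Fin d → ℂ) : |v x - v y| ≤ v (x - y) := by
  have hx := hv.add_le (x - y) y
  have hy := hv.add_le (y - x) x
  rw [sub_add_cancel] at hx
  rw [sub_add_cancel, ← neg_sub, hv.map_neg] at hy
  exact abs_sub_le_iff.2 ⟨by linarith, by linarith⟩

lemma sum_le (hv : IsCNorm v) {ι : Type*} (s : Finset ι) (f : ι → Fin d → ℂ) :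
    v (∑ i ∈ s, f i) ≤ ∑ i ∈ s, v (f i) := by
  classical
  induction s using Finset.induction with
  | empty => simp [hv.map_zero]
  | insert i s hi ih =>
    rw [Finset.sum_insert hi, Finset.sum_insert hi]
    exact (hv.add_le _ _).trans (add_le_add le_rfl ih)

lemma exists_le_mul_norm (hv : IsCNorm v) : ∃ C, 0 ≤ C ∧ ∀ x, v x ≤ C * ‖x‖ := by
  classical
  let e : Fin d → Fin d → ℂ := fun i j => if i = j then 1 else 0
  refine ⟨∑ i, v (e i), Finset.sum_nonneg fun i _ => hv.nonneg _, fun x => ?_⟩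
  calc v x = v (∑ i, x i • e i) := by rw [← pi_eq_sum_univ x]
    _ ≤ ∑ i, ‖x i‖ * v (e i) := (hv.sum_le _ _).trans_eq (by simp only [hv.map_smul])
    _ ≤ ∑ i, ‖x‖ * v (e i) := by gcongr with i; exacts [hv.nonneg _, norm_le_pi_norm x i]
    _ = (∑ i, v (e i)) * ‖x‖ := by rw [← Finset.mul_sum, mul_comm]

lemma continuous (hv : IsCNorm v) : Continuous v := by
  obtain ⟨C, hC, hle⟩ := hv.exists_le_mul_norm
  refine (LipschitzWith.of_dist_le_mul (K := C.toNNReal) fun x y => ?_).continuous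
  rw [Real.dist_eq, dist_eq_norm, Real.coe_toNNReal C hC]
  exact (hv.abs_sub_le x y).trans (hle _)

lemma exists_pos_mul_norm_le (hv : IsCNorm v) : ∃ c, 0 < c ∧ ∀ x, c * ‖x‖ ≤ v x := by
  rcases isEmpty_or_nonempty (Fin d) with hd | hd
  · exact ⟨1, one_pos, fun x => by simp [Subsingleton.elim x 0, hv.map_zero]⟩
  obtain ⟨z, hz, hmin⟩ := (isCompact_sphere (0 : Fin d → ℂ) 1).exists_isMinOn
    (NormedSpace.sphere_nonempty.2 zero_le_one) hv.continuous.continuousOn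
  have hz0 : z ≠ 0 := ne_zero_of_mem_unit_sphere ⟨z, hz⟩
  refine ⟨v z, hv.pos hz0, fun x => ?_⟩
  rcases eq_or_ne x 0 with rfl | hx
  · simp [hv.map_zero]
  have hxn : 0 < ‖x‖ := norm_pos_iff.2 hx
  have hunit : ((‖x‖⁻¹ : ℝ) : ℂ) • x ∈ Metric.sphere (0 : Fin d → ℂ) 1 := by
    rw [mem_sphere_zero_iff_norm, norm_smul, Complex.norm_real, norm_inv, norm_norm,
      inv_mul_cancel₀ hxn.ne']
  have := hmin hunit
  rw [Set.mem_ofPred_eq, hv.map_smul, Complex.norm_real, norm_inv, norm_norm] at this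
  rwa [le_inv_mul_iff₀ hxn, mul_comm] at this

-- Without this, `opNorm v A ≤ 1` would say nothing: `sSup` of an unbounded set is `0`.
lemma bddAbove_opNorm_set (hv : IsCNorm v) (A : Matrix (Fin d) (Fin d) ℂ) :
    BddAbove {c : ℝ | ∃ x : Fin d → ℂ, v x ≤ 1 ∧ c = v (A *ᵥ x)} := by
  obtain ⟨C, hC, hle⟩ := hv.exists_le_mul_norm
  obtain ⟨c, hc, hge⟩ := hv.exists_pos_mul_norm_le
  let f := LinearMap.toContinuousLinearMap (Matrix.mulVecLin A)
  refine ⟨C * (‖f‖ * c⁻¹), ?_⟩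
  rintro _ ⟨x, hx, rfl⟩
  have hxn : ‖x‖ ≤ c⁻¹ := by rw [← one_div, le_div_iff₀' hc]; linarith [hge x]
  calc v (A *ᵥ x) ≤ C * ‖f x‖ := hle _
    _ ≤ C * (‖f‖ * c⁻¹) := by gcongr; exact f.le_opNorm_of_le hxn

lemma le_opNorm_mul (hv : IsCNorm v) (A : Matrix (Fin d) (Fin d) ℂ) (x : Fin d → ℂ) :
    v (A *ᵥ x) ≤ opNorm v A * v x := by
  rcases eq_or_ne x 0 with rfl | hx
  · simp [hv.map_zero]
  have hvx := hv.pos hx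
  set y := ((v x)⁻¹ : ℂ) • x
  have hy : v y = 1 := by
    rw [hv.map_smul, norm_inv, Complex.norm_real, Real.norm_of_nonneg hvx.le,
      inv_mul_cancel₀ hvx.ne']
  have := le_csSup (hv.bddAbove_opNorm_set A) ⟨y, hy.le, rfl⟩
  rw [mulVec_smul, hv.map_smul, norm_inv, Complex.norm_real, Real.norm_of_nonneg hvx.le,
    inv_mul_le_iff₀ hvx, mul_comm] at this
  exact this

lemma norm_le_opNorm_of_mem_spectrum (hv : IsCNorm v) {A : Matrix (Fin d) (Fin d) ℂ} {μ : ℂ}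
    (hμ : μ ∈ spectrum ℂ A) : ‖μ‖ ≤ opNorm v A := by
  rw [← spectrum_toLin', ← Module.End.hasEigenvalue_iff_mem_spectrum] at hμ
  obtain ⟨w, hw⟩ := hμ.exists_hasEigenvector
  have hAw : A *ᵥ w = μ • w := by rw [← toLin'_apply]; exact hw.apply_eq_smul
  have := hv.le_opNorm_mul A w
  rw [hAw, hv.map_smul] at this
  exact le_of_mul_le_mul_right this (hv.pos hw.2)

lemma bddAbove_norm_spectrum (hv : IsCNorm v) (A : Matrix (Fin d) (Fin d) ℂ) :
    BddAbove ((fun μ : ℂ => ‖μ‖) '' spectrum ℂ A) :=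
  ⟨opNorm v A, by rintro _ ⟨μ, hμ, rfl⟩; exact hv.norm_le_opNorm_of_mem_spectrum hμ⟩

lemma map_mulVec_sub_algebraMap_le (hv : IsCNorm v) {A : Matrix (Fin d) (Fin d) ℂ}
    (hA : opNorm v A ≤ 1) {μ : ℂ} (hμ : ‖μ‖ ≤ 1) (y : Fin d → ℂ) :
    v ((A - algebraMap ℂ _ μ) *ᵥ y) ≤ 2 * v y := by
  rw [Algebra.algebraMap_eq_smul_one, sub_mulVec, smul_mulVec, one_mulVec]
  have hAy := (hv.le_opNorm_mul A y).trans (mul_le_of_le_one_left (hv.nonneg y) hA)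
  have hμy : v (μ • y) ≤ v y := by
    rw [hv.map_smul]; exact mul_le_of_le_one_left (hv.nonneg y) hμ
  linarith [hv.sub_le (A *ᵥ y) (μ • y)]

lemma map_eval_smul_sub_aeval_mulVec_le (hv : IsCNorm v) {A : Matrix (Fin d) (Fin d) ℂ}
    (hA : opNorm v A ≤ 1) {lam : ℂ} (hlam : ‖lam‖ ≤ 2) (x : Fin d → ℂ) (s : Multiset ℂ)
    (hs : ∀ μ ∈ s, ‖μ‖ ≤ 1) :
    v ((s.map (X - C ·)).prod.eval lam • x - aeval A (s.map (X - C ·)).prod *ᵥ x) ≤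
      3 ^ Multiset.card s * v (A *ᵥ x - lam • x) := by
  induction s using Multiset.induction_on with
  | empty => simpa [hv.map_zero] using hv.nonneg _
  | cons μ s ih =>
    have hμ := hs μ (Multiset.mem_cons_self μ s)
    specialize ih fun ν hν => hs ν (Multiset.mem_cons_of_mem hν)
    set p := (s.map (X - C ·)).prod
    set e := A *ᵥ x - lam • x
    have hp : ‖p.eval lam‖ ≤ 3 ^ Multiset.card s := by
      rw [eval_multiset_prod_X_sub_C]
      refine Multiset.norm_prod_map_le_pow_card fun ν hν => ?_
      have := hs ν (Multiset.mem_cons_of_mem hν)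
      linarith [norm_sub_le lam ν]
    have hsplit : ((X - C μ) * p).eval lam • x - aeval A ((X - C μ) * p) *ᵥ x =
        (A - algebraMap ℂ _ μ) *ᵥ (p.eval lam • x - aeval A p *ᵥ x) - p.eval lam • e := by
      simp only [eval_mul, eval_sub, eval_X, eval_C, map_mul, map_sub, aeval_X, aeval_C, e,
        ← mulVec_mulVec, mulVec_sub, mulVec_smul, sub_mulVec, Algebra.algebraMap_eq_smul_one,
        smul_mulVec, one_mulVec]
      module
    rw [Multiset.map_cons, Multiset.prod_cons, hsplit, Multiset.card_cons, pow_succ]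
    calc _ ≤ 2 * v (p.eval lam • x - aeval A p *ᵥ x) + ‖p.eval lam‖ * v e := by
          rw [← hv.map_smul]
          exact (hv.sub_le _ _).trans
            (add_le_add_left (hv.map_mulVec_sub_algebraMap_le hA hμ _) _)
      _ ≤ 2 * (3 ^ Multiset.card s * v e) + 3 ^ Multiset.card s * v e := by
          gcongr; exact hv.nonneg e
      _ = _ := by ring

end IsCNorm

/-- if `‖A‖ ≤ 1`, `‖x‖ = 1`, `|λ| ≤ 2` and `‖Ax − λx‖ ≤ (ε|λ|)^d`, then
`Λ(A) ≥ |λ|(1 − 4ε)`. -/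
theorem stmt_11 {d : ℕ} (v : (Fin d → ℂ) → ℝ) (hv : IsCNorm v)
    (A : Matrix (Fin d) (Fin d) ℂ) (hA : opNorm v A ≤ 1)
    (x : Fin d → ℂ) (hx : v x = 1) (ε : ℝ) (hε : 0 < ε)
    (lam : ℂ) (hlam : ‖lam‖ ≤ 2)
    (h : v (A.mulVec x - lam • x) ≤ (ε * ‖lam‖) ^ d) :
    ‖lam‖ * (1 - 4 * ε) ≤ specRad A := by
  have hd : d ≠ 0 := by
    rintro rfl
    rw [Subsingleton.elim x 0, hv.map_zero] at hx
    exact zero_ne_one hx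
  have hsplits : A.charpoly.Splits := IsAlgClosed.splits _
  have hmonic := charpoly_monic A
  set s := A.charpoly.roots
  have hcard : Multiset.card s = d := by
    rw [← hsplits.natDegree_eq_card_roots, charpoly_natDegree_eq_dim, Fintype.card_fin]
  have hspec : ∀ μ ∈ s, μ ∈ spectrum ℂ A := fun μ hμ =>
    mem_spectrum_of_isRoot_charpoly (isRoot_of_mem_roots hμ)
  have hχ : ‖(s.map (lam - ·)).prod‖ ≤ (3 * ε * ‖lam‖) ^ Multiset.card s := by
    have := hv.map_eval_smul_sub_aeval_mulVec_le hA hlam x s fun μ hμ =>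
      (hv.norm_le_opNorm_of_mem_spectrum (hspec μ hμ)).trans hA
    rw [← hsplits.eq_prod_roots_of_monic hmonic, aeval_self_charpoly, zero_mulVec, sub_zero,
      hv.map_smul, hx, mul_one, hsplits.eval_eq_prod_roots_of_monic hmonic] at this
    rw [hcard, mul_assoc, mul_pow]
    exact this.trans (by rw [hcard]; gcongr)
  obtain ⟨μ, hμ, hclose⟩ := Multiset.exists_mem_norm_le_of_norm_prod_map_le
    (Multiset.card_pos.1 (hcard ▸ Nat.pos_of_ne_zero hd)) (by positivity) hχ
  calc ‖lam‖ * (1 - 4 * ε) ≤ ‖lam‖ - ‖lam - μ‖ := by nlinarith [norm_nonneg lam]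
    _ ≤ ‖μ‖ := by simpa using norm_sub_norm_le lam (lam - μ)
    _ ≤ specRad A := le_csSup (hv.bddAbove_norm_spectrum A) ⟨μ, hspec μ hμ, rfl⟩
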